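/- arXiv:1804.04532 — 3 statements merged into one kernel-verified Lean document; each statement's English description precedes it below -/
import Mathlib

section
/- For τ ≥ 1, the indicator that the strongest transmitter has SINR exceeding τ equals the sum over all transmitters of the indicators of their SINR exceeding τ. Precisely: let (ℓ_i)_{i ∈ F} be a finite nonempty family of nonnegative reals, σ² ≥ 0, τ ≥ 1, and let i₀ ∈ F be any index with ℓ_{i₀} = max_{i ∈ F} ℓ_i. Then the indicator 1{ℓ_{i₀} > τ((∑_{j ≠ i₀} ℓ_j) + σ²)} equals ∑_{i ∈ F} 1{ℓ_i > τ((∑_{j ≠ i} ℓ_j) + σ²)}. -/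
/-!
With `τ ≥ 1`, a transmitter other than the strongest one `i₀` never exceeds the threshold: its
interference already contains `ℓ i₀ ≥ ℓ i`. So every summand except the one at `i₀` vanishes.
-/

open Finset

lemma le_mul_sum_erase_add_of_le {ι : Type*} [DecidableEq ι] {F : Finset ι} {ℓ : ι → ℝ}
    {σ2 τ : ℝ} (hℓ : ∀ j ∈ F, 0 ≤ ℓ j) (hσ2 : 0 ≤ σ2) (hτ : 1 ≤ τ) {i k : ι} (hk : k ∈ F)
    (hki : k ≠ i) (hle : ℓ i ≤ ℓ k) :
    ℓ i ≤ τ * ((∑ j ∈ F.erase i, ℓ j) + σ2) := by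
  have hℓ' : ∀ j ∈ F.erase i, 0 ≤ ℓ j := fun j hj => hℓ j (mem_of_mem_erase hj)
  have hk_le : ℓ k ≤ ∑ j ∈ F.erase i, ℓ j := single_le_sum hℓ' (mem_erase.mpr ⟨hki, hk⟩)
  have hpos : 0 ≤ (∑ j ∈ F.erase i, ℓ j) + σ2 := add_nonneg (sum_nonneg hℓ') hσ2
  calc ℓ i ≤ ℓ k := hle
    _ ≤ (∑ j ∈ F.erase i, ℓ j) + σ2 := le_add_of_le_of_nonneg hk_le hσ2
    _ ≤ τ * ((∑ j ∈ F.erase i, ℓ j) + σ2) := le_mul_of_one_le_left hpos hτ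

theorem indicator_max_SINR_eq_sum_indicators_general
    {ι : Type*} [DecidableEq ι] (F : Finset ι)
    (ℓ : ι → ℝ) (σ2 τ : ℝ)
    (hℓ : ∀ i ∈ F, 0 ≤ ℓ i) (hσ2 : 0 ≤ σ2) (hτ : 1 ≤ τ)
    (i₀ : ι) (hi₀ : i₀ ∈ F) (hmax : ∀ i ∈ F, ℓ i ≤ ℓ i₀) :
    (if ℓ i₀ > τ * ((∑ j ∈ F.erase i₀, ℓ j) + σ2) then (1 : ℝ) else 0)
      = ∑ i ∈ F, (if ℓ i > τ * ((∑ j ∈ F.erase i, ℓ j) + σ2) then (1 : ℝ) else 0) := by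
  rw [sum_eq_single_of_mem i₀ hi₀]
  intro i hi hne
  exact if_neg (not_lt.mpr (le_mul_sum_erase_add_of_le hℓ hσ2 hτ hi₀ (Ne.symm hne) (hmax i hi)))

/-- For `τ ≥ 1`, the indicator that the strongest transmitter has SINR exceeding `τ`
equals the sum over all transmitters of the indicators of their SINR exceeding `τ`. -/
theorem indicator_max_SINR_eq_sum_indicators
    {ι : Type*} [DecidableEq ι] (F : Finset ι) (hF : F.Nonempty)
    (ℓ : ι → ℝ) (σ2 τ : ℝ)
    (hℓ : ∀ i ∈ F, 0 ≤ ℓ i) (hσ2 : 0 ≤ σ2) (hτ : 1 ≤ τ)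
    (i₀ : ι) (hi₀ : i₀ ∈ F) (hmax : ∀ i ∈ F, ℓ i ≤ ℓ i₀) :
    (if ℓ i₀ > τ * ((∑ j ∈ F.erase i₀, ℓ j) + σ2) then (1 : ℝ) else 0)
      = ∑ i ∈ F, (if ℓ i > τ * ((∑ j ∈ F.erase i, ℓ j) + σ2) then (1 : ℝ) else 0) :=
  indicator_max_SINR_eq_sum_indicators_general F ℓ σ2 τ hℓ hσ2 hτ i₀ hi₀ hmax
end

section
/- Corollary 1: the SINR coverage of a corner user in a room of half-side a with transmitter density λ equals that of a center user in a room of half-side 2a with transmitter density λ/4. Precisely: fix a > 0, h > 0, β > 0, λ > 0, σ² ≥ 0, τ > 0. Then C(λ, a, h, σ², τ, (a,a)) = C(λ/4, 2a, h, σ², τ, (0,0)), where C(λ, a, h, σ², τ, y) is the coverage probability of the mixed-binomial Poisson model with parameters (λ, a, h) at receiver location y. -/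
open MeasureTheory ProbabilityTheory
open scoped ENNReal

noncomputable section

/-- The plane `ℝ²` with the Euclidean norm. -/
abbrev E2 := EuclideanSpace ℝ (Fin 2)

/-- The closed square of center `c` and half-side `a`. -/
def Sq (c : E2) (a : ℝ) : Set E2 := {x | ∀ i, |x i - c i| ≤ a}

/-- The path-loss between a transmitter at `x` (at height `h`) and a receiver at `y`. -/
def pl (h β : ℝ) (x y : E2) : ℝ := (‖x - y‖ ^ 2 + h ^ 2) ^ (-β)

/-- The SINR coverage probability of the mixed-binomial Poisson model with transmitter
density `lam`, room half-side `a` and height `h`, at a receiver located at `y`, with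
noise `σ2` and SINR threshold `τ`: the number of transmitters `N` is Poisson with mean
`4a²λ` and, given `N = n`, the transmitters are `n` i.i.d. points uniform on `S(0,a)`;
coverage holds when some transmitter `i` satisfies
`ℓ(X_i,y) > τ (∑_{j≠i} ℓ(X_j,y) + σ2)`. -/
def cov (β lam a h σ2 τ : ℝ) (y : E2) : ℝ≥0∞ :=
  ∑' n : ℕ,
    ENNReal.ofReal (Real.exp (-(4 * a ^ 2 * lam)) * (4 * a ^ 2 * lam) ^ n / n.factorial) *
      ((Measure.pi fun _ : Fin n => volume.restrict (Sq 0 a))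
          {x : Fin n → E2 | ∃ i,
            pl h β (x i) y > τ * ((∑ j, pl h β (x j) y) - pl h β (x i) y + σ2)}
        / (volume (Sq 0 a)) ^ n)

/-- The corner of the room `S(0,a)`, i.e. the point `(a, a)`. -/
def corner (a : ℝ) : E2 := (WithLp.equiv 2 (Fin 2 → ℝ)).symm ![a, a]

/-! The fold `u ↦ (a - |u₁|, a - |u₂|)` maps `S(0,2a)` four-to-one onto `S(0,a)`, pushing
Lebesgue measure on the big square forward to four times Lebesgue measure on the small one,
and it turns distance to the center into distance to the corner: `‖fold u - (a,a)‖ = ‖u‖`.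
So for every number `n` of transmitters, the coverage event of the center user in the big room
is the preimage of that of the corner user in the small room; the factor `4ⁿ` cancels against
the volume ratio `(16a²/4a²)ⁿ`, and the Poisson means `4(2a)²λ/4 = 4a²λ` agree. -/

open Set
open scoped NNReal

namespace MeasureTheory.Measure

theorem pi_const_smul {ι α : Type*} [Fintype ι] [MeasurableSpace α] (μ : Measure α)
    [SigmaFinite μ] (c : ℝ≥0) :
    Measure.pi (fun _ : ι => c • μ) = c ^ Fintype.card ι • Measure.pi fun _ => μ := by
  refine pi_eq fun s hs => ?_
  simp only [smul_apply, pi_pi, Finset.prod_mul_distrib, Finset.prod_const, Finset.card_univ,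
    ENNReal.smul_def, smul_eq_mul, ENNReal.coe_pow]

theorem pi_map_pi_of_map_eq_smul {ι α β : Type*} [Fintype ι] [MeasurableSpace α]
    [MeasurableSpace β] {μ : Measure α} {ν : Measure β} [SigmaFinite μ] [SigmaFinite ν]
    {f : α → β} (hf : Measurable f) {c : ℝ≥0} (h : μ.map f = c • ν) :
    (Measure.pi fun _ : ι => μ).map (fun x i => f (x i))
      = c ^ Fintype.card ι • Measure.pi fun _ => ν := by
  have : SigmaFinite (μ.map f) := h ▸ inferInstance
  rw [pi_map_pi fun _ => hf.aemeasurable, h, pi_const_smul]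

end MeasureTheory.Measure

namespace Real

theorem map_abs_volume_restrict_Icc {r : ℝ} (hr : 0 ≤ r) :
    (volume.restrict (Icc (-r) r)).map (|·|) = (2 : ℝ≥0) • volume.restrict (Icc 0 r) := by
  have hneg : (volume.restrict (Ico (-r) 0)).map (|·|) = volume.restrict (Icc 0 r) := by
    have habs : (volume.restrict (Ico (-r) 0)).map (|·|)
        = (volume.restrict (Ico (-r) 0)).map (fun t : ℝ => -t) := by
      refine Measure.map_congr ?_
      filter_upwards [ae_restrict_mem measurableSet_Ico] with t ht
      exact abs_of_neg ht.2
    have hpre : (fun t : ℝ => -t) ⁻¹' Ioc 0 r = Ico (-r) 0 := by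
      ext t; simp
    rw [habs, ← hpre, ((Measure.measurePreserving_neg volume).restrict_preimage_emb
      (MeasurableEquiv.neg ℝ).measurableEmbedding (Ioc 0 r)).map_eq,
      Measure.restrict_congr_set Ioc_ae_eq_Icc]
  have hpos : (volume.restrict (Icc 0 r)).map (|·|) = volume.restrict (Icc 0 r) := by
    conv_rhs => rw [← Measure.map_id (μ := volume.restrict (Icc 0 r))]
    refine Measure.map_congr ?_
    filter_upwards [ae_restrict_mem measurableSet_Icc] with t ht
    exact abs_of_nonneg ht.1
  rw [← Ico_union_Icc_eq_Icc (neg_nonpos.mpr hr) hr,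
    Measure.restrict_union (disjoint_left.mpr fun _ h₁ h₂ => h₁.2.not_ge h₂.1) measurableSet_Icc,
    Measure.map_add _ _ measurable_abs, hneg, hpos, two_smul]

theorem map_sub_left_volume_restrict_Icc (c r : ℝ) :
    (volume.restrict (Icc 0 r)).map (c - ·) = volume.restrict (Icc (c - r) c) := by
  have hpre : (c - ·) ⁻¹' Icc (c - r) c = Icc 0 r := by simp
  rw [← hpre, ((Measure.measurePreserving_sub_left volume c).restrict_preimage_emb
    (MeasurableEquiv.subLeft c).measurableEmbedding _).map_eq]

theorem map_sub_abs_volume_restrict_Icc (c : ℝ) {r : ℝ} (hr : 0 ≤ r) :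
    (volume.restrict (Icc (-r) r)).map (fun t => c - |t|)
      = (2 : ℝ≥0) • volume.restrict (Icc (c - r) c) := by
  rw [show (fun t : ℝ => c - |t|) = (c - ·) ∘ (|·|) from rfl,
    ← Measure.map_map (measurable_const_sub c) measurable_abs, map_abs_volume_restrict_Icc hr,
    Measure.map_smul, map_sub_left_volume_restrict_Icc]

theorem map_sub_abs_volume_restrict_cube (ι : Type*) [Fintype ι] (c : ℝ) {r : ℝ} (hr : 0 ≤ r) :
    (volume.restrict (univ.pi fun _ : ι => Icc (-r) r)).map (fun x i => c - |x i|)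
      = (2 : ℝ≥0) ^ Fintype.card ι • volume.restrict (univ.pi fun _ : ι => Icc (c - r) c) := by
  rw [volume_pi, Measure.restrict_pi_pi, Measure.restrict_pi_pi,
    Measure.pi_map_pi_of_map_eq_smul (by fun_prop) (map_sub_abs_volume_restrict_Icc c hr)]

end Real

def squareFold (a : ℝ) (x : E2) : E2 := WithLp.toLp 2 fun i => a - |x i|

@[fun_prop]
theorem measurable_squareFold (a : ℝ) : Measurable (squareFold a) := by
  unfold squareFold; fun_prop

theorem toLp_preimage_Sq_zero (b : ℝ) :
    WithLp.toLp 2 ⁻¹' Sq 0 b = univ.pi fun _ : Fin 2 => Icc (-b) b := by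
  ext x
  simp only [Sq, mem_preimage, mem_ofPred_eq, mem_univ_pi, mem_Icc, abs_le, PiLp.zero_apply,
    sub_zero]

theorem volume_restrict_Sq_zero (b : ℝ) :
    volume.restrict (Sq 0 b)
      = (volume.restrict (univ.pi fun _ : Fin 2 => Icc (-b) b)).map (WithLp.toLp 2) := by
  rw [← (PiLp.volume_preserving_toLp (Fin 2)).map_eq, ← toLp_preimage_Sq_zero]
  exact (MeasurableEquiv.toLp 2 (Fin 2 → ℝ)).restrict_map _ _

theorem map_squareFold_volume_restrict_Sq {a : ℝ} (ha : 0 ≤ a) :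
    (volume.restrict (Sq 0 (2 * a))).map (squareFold a)
      = (4 : ℝ≥0) • volume.restrict (Sq 0 a) := by
  have hcube := Real.map_sub_abs_volume_restrict_cube (Fin 2) a (r := 2 * a) (by positivity)
  rw [show a - 2 * a = -a by ring] at hcube
  rw [volume_restrict_Sq_zero, volume_restrict_Sq_zero,
    Measure.map_map (by fun_prop) (by fun_prop),
    show squareFold a ∘ WithLp.toLp 2 = WithLp.toLp 2 ∘ fun x i => a - |x i| from rfl,
    ← Measure.map_map (by fun_prop) (by fun_prop), hcube, Measure.map_smul]
  norm_num

theorem norm_squareFold_sub_corner (a : ℝ) (u : E2) : ‖squareFold a u - corner a‖ = ‖u‖ := by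
  simp [EuclideanSpace.norm_eq, squareFold, corner, Fin.sum_univ_two]

theorem pl_squareFold_corner (a h β : ℝ) (u : E2) :
    pl h β (squareFold a u) (corner a) = pl h β u 0 := by
  rw [pl, pl, norm_squareFold_sub_corner, sub_zero]

def coverageEvent (h β σ2 τ : ℝ) (y : E2) (n : ℕ) : Set (Fin n → E2) :=
  {x | ∃ i, pl h β (x i) y > τ * ((∑ j, pl h β (x j) y) - pl h β (x i) y + σ2)}

theorem measurableSet_coverageEvent (h β σ2 τ : ℝ) (y : E2) (n : ℕ) :
    MeasurableSet (coverageEvent h β σ2 τ y n) := by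
  have hpl : ∀ i : Fin n, Measurable fun x : Fin n → E2 => pl h β (x i) y := by
    intro i; unfold pl; fun_prop
  rw [coverageEvent, ofPred_exists]
  refine MeasurableSet.iUnion fun i => measurableSet_lt ?_ (hpl i)
  exact measurable_const.mul
    ((Finset.measurable_sum _ fun j _ => hpl j).sub (hpl i) |>.add_const _)

theorem preimage_squareFold_coverageEvent_corner (a h β σ2 τ : ℝ) (n : ℕ) :
    (fun x i => squareFold a (x i)) ⁻¹' coverageEvent h β σ2 τ (corner a) n
      = coverageEvent h β σ2 τ 0 n := by
  ext x; simp only [coverageEvent, mem_preimage, mem_ofPred_eq, pl_squareFold_corner]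

theorem center_conditional_coverage_eq_corner {a : ℝ} (ha : 0 ≤ a) (h β σ2 τ : ℝ) (n : ℕ) :
    (Measure.pi fun _ : Fin n => volume.restrict (Sq 0 (2 * a))) (coverageEvent h β σ2 τ 0 n)
        / volume (Sq 0 (2 * a)) ^ n
      = (Measure.pi fun _ : Fin n => volume.restrict (Sq 0 a))
          (coverageEvent h β σ2 τ (corner a) n) / volume (Sq 0 a) ^ n := by
  have hmap := map_squareFold_volume_restrict_Sq ha
  have hfold : Measurable fun (x : Fin n → E2) i => squareFold a (x i) := by fun_prop
  have hevent : (Measure.pi fun _ : Fin n => volume.restrict (Sq 0 (2 * a)))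
      (coverageEvent h β σ2 τ 0 n)
        = 4 ^ n * (Measure.pi fun _ : Fin n => volume.restrict (Sq 0 a))
          (coverageEvent h β σ2 τ (corner a) n) := by
    rw [← preimage_squareFold_coverageEvent_corner,
      ← Measure.map_apply hfold (measurableSet_coverageEvent ..),
      Measure.pi_map_pi_of_map_eq_smul (measurable_squareFold a) hmap]
    simp
  have hvolume : volume (Sq 0 (2 * a)) = 4 * volume (Sq 0 a) := by
    simpa [Measure.map_apply (measurable_squareFold a) MeasurableSet.univ] using
      congrArg (· univ) hmap
  rw [hevent, hvolume, mul_pow, ENNReal.mul_div_mul_left _ _ (by positivity) (by simp)]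

theorem corner_coverage_eq_center_coverage_quarter_density_general
    (a h β lam σ2 τ : ℝ) (ha : 0 < a) :
    cov β lam a h σ2 τ (corner a) = cov β (lam / 4) (2 * a) h σ2 τ 0 := by
  unfold cov
  refine tsum_congr fun n => ?_
  rw [show 4 * (2 * a) ^ 2 * (lam / 4) = 4 * a ^ 2 * lam by ring]
  exact congrArg _ (center_conditional_coverage_eq_corner ha.le h β σ2 τ n).symm

/-- Corollary 1: the SINR coverage of a corner user in a room of half-side `a` with
transmitter density `λ` equals that of a center user in a room of half-side `2a`
with transmitter density `λ/4`. -/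
theorem corner_coverage_eq_center_coverage_quarter_density
    (a h β lam σ2 τ : ℝ) (ha : 0 < a) (hh : 0 < h) (hβ : 0 < β) (hlam : 0 < lam)
    (hσ2 : 0 ≤ σ2) (hτ : 0 < τ) :
    cov β lam a h σ2 τ (corner a) = cov β (lam / 4) (2 * a) h σ2 τ 0 :=
  corner_coverage_eq_center_coverage_quarter_density_general a h β lam σ2 τ ha

end
end

section
/- Corollary 2: in the absence of noise, the SINR coverage of a corner user in a room of height h equals that of a center user in a room of height h/2. Precisely: fix a > 0, h > 0, β > 0, λ > 0, τ > 0. Then C(λ, a, h, 0, τ, (a,a)) = C(λ, a, h/2, 0, τ, (0,0)), where C(λ, a, h, σ², τ, y) is the coverage probability of the mixed-binomial Poisson model with parameters (λ, a, h) at receiver location y. -/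
open MeasureTheory ProbabilityTheory
open scoped ENNReal

noncomputable section

/-!
Without noise, the coverage event is unchanged when all path losses are multiplied by a common
positive factor. For `x` uniform on the square, each coordinate `(a - xᵢ)/2` is uniform on
`[0, a]`, as is `|xᵢ|`, so `‖x - (a,a)‖²/4` has the law of `‖x‖²`. Hence the corner path loss
`(‖x - (a,a)‖² + h²)^(-β) = 4^(-β) (‖x - (a,a)‖²/4 + (h/2)²)^(-β)` has the law of `4^(-β)` times
the center path loss at height `h/2`, and since the transmitters are i.i.d. the two coverage
probabilities agree for every number of transmitters.
-/

open Set

lemma map_half_sub_volume_restrict_Icc (a : ℝ) :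
    (volume.restrict (Icc (-a) a)).map (fun t => (a - t) / 2) =
      (2 : ℝ≥0∞) • volume.restrict (Icc 0 a) := by
  have hvol : volume.map (fun t : ℝ => (a - t) / 2) = (2 : ℝ≥0∞) • volume := by
    have hcomp : (fun t : ℝ => (a - t) / 2) = (· * 2⁻¹) ∘ (a - ·) := by
      funext t; simp [div_eq_mul_inv]
    rw [hcomp, ← Measure.map_map (by fun_prop) (by fun_prop),
      (Measure.measurePreserving_sub_left volume a).map_eq,
      Real.map_volume_mul_right (by norm_num)]
    norm_num
  have hpre : (fun t : ℝ => (a - t) / 2) ⁻¹' Icc 0 a = Icc (-a) a := by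
    ext t
    simp only [mem_preimage, mem_Icc]
    constructor <;> intro ⟨h₁, h₂⟩ <;> constructor <;> linarith
  rw [← hpre, ← Measure.restrict_map (by fun_prop) measurableSet_Icc, hvol, Measure.restrict_smul]

lemma map_sq_volume_restrict_Icc_neg {a : ℝ} (ha : 0 ≤ a) :
    (volume.restrict (Icc (-a) a)).map (· ^ 2) =
      (2 : ℝ≥0∞) • (volume.restrict (Icc 0 a)).map (· ^ 2) := by
  have hsplit : volume.restrict (Icc (-a) a) =
      volume.restrict (Ico (-a) 0) + volume.restrict (Icc 0 a) := by
    rw [← Ico_union_Icc_eq_Icc (neg_nonpos.2 ha) ha]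
    exact Measure.restrict_union (disjoint_left.2 fun t h₁ h₂ => h₁.2.not_ge h₂.1)
      measurableSet_Icc
  have hneg : volume.restrict (Ico (-a) 0) = (volume.restrict (Icc 0 a)).map Neg.neg := by
    have hpre : (Neg.neg : ℝ → ℝ) ⁻¹' Ico (-a) 0 = Ioc 0 a := by
      ext t
      simp only [mem_preimage, mem_Ico, mem_Ioc]
      constructor <;> intro ⟨h₁, h₂⟩ <;> constructor <;> linarith
    rw [← Measure.restrict_congr_set Ioc_ae_eq_Icc, ← hpre,
      ← Measure.restrict_map measurable_neg measurableSet_Ico, Measure.map_neg_eq_self]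
  have hsq_neg : (fun t : ℝ => t ^ 2) ∘ Neg.neg = (· ^ 2) := by
    funext t; simp
  rw [hsplit, hneg, Measure.map_add _ _ (by fun_prop), Measure.map_map (by fun_prop) measurable_neg,
    hsq_neg, two_smul]

lemma map_sq_half_sub_volume_restrict_Icc {a : ℝ} (ha : 0 ≤ a) :
    (volume.restrict (Icc (-a) a)).map (fun t => ((a - t) / 2) ^ 2) =
      (volume.restrict (Icc (-a) a)).map (· ^ 2) := by
  have hcomp : (fun t : ℝ => ((a - t) / 2) ^ 2) = (· ^ 2) ∘ (fun t => (a - t) / 2) := rfl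
  rw [hcomp, ← Measure.map_map (by fun_prop) (by fun_prop), map_half_sub_volume_restrict_Icc,
    Measure.map_smul, map_sq_volume_restrict_Icc_neg ha]

lemma MeasureTheory.Measure.map_pi_comp_eq_of_map_eq {ι α β : Type*} [Fintype ι] [MeasurableSpace α]
    [MeasurableSpace β] {μ : Measure α} [SigmaFinite μ] {f g : α → β} (hf : Measurable f)
    (hg : Measurable g) (hfg : μ.map f = μ.map g) [SigmaFinite (μ.map g)] :
    (Measure.pi fun _ : ι => μ).map (fun x i => f (x i)) =
      (Measure.pi fun _ : ι => μ).map (fun x i => g (x i)) := by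
  rw [(measurePreserving_pi _ _ fun _ => ⟨hf, hfg⟩).map_eq,
    (measurePreserving_pi _ _ fun _ => hg.measurePreserving μ).map_eq]

lemma measurePreserving_ofLp_restrict_Sq (a : ℝ) :
    MeasurePreserving (WithLp.ofLp : E2 → Fin 2 → ℝ) (volume.restrict (Sq 0 a))
      (Measure.pi fun _ => volume.restrict (Icc (-a) a)) := by
  have hSq : Sq 0 a = WithLp.ofLp ⁻¹' univ.pi fun _ => Icc (-a) a := by
    ext x
    simp only [Sq, mem_ofPred_eq, mem_preimage, mem_univ_pi, mem_Icc, abs_le, PiLp.zero_apply,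
      sub_zero]
  rw [hSq, ← Measure.restrict_pi_pi, ← volume_pi]
  exact (PiLp.volume_preserving_ofLp _).restrict_preimage (.univ_pi fun _ => measurableSet_Icc)

instance (a : ℝ) : IsFiniteMeasure (volume.restrict (Sq 0 a)) := by
  have h := measurePreserving_ofLp_restrict_Sq a
  have : IsFiniteMeasure ((volume.restrict (Sq 0 a)).map WithLp.ofLp) := by
    rw [h.map_eq]; infer_instance
  exact Measure.isFiniteMeasure_of_map h.measurable.aemeasurable

lemma corner_apply (a : ℝ) (i : Fin 2) : corner a i = a := by
  fin_cases i <;> rfl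

lemma map_normSq_sub_corner_div_four {a : ℝ} (ha : 0 ≤ a) :
    (volume.restrict (Sq 0 a)).map (fun x : E2 => ‖x - corner a‖ ^ 2 / 4) =
      (volume.restrict (Sq 0 a)).map (fun x : E2 => ‖x‖ ^ 2) := by
  set μ := volume.restrict (Sq 0 a)
  have hP := measurePreserving_ofLp_restrict_Sq a
  have hcoord : (μ.map WithLp.ofLp).map (fun v i => ((a - v i) / 2) ^ 2) =
      (μ.map WithLp.ofLp).map (fun v i => v i ^ 2) := by
    rw [hP.map_eq]
    exact Measure.map_pi_comp_eq_of_map_eq (by fun_prop) (by fun_prop)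
      (map_sq_half_sub_volume_restrict_Icc ha)
  calc μ.map (fun x : E2 => ‖x - corner a‖ ^ 2 / 4)
      = ((μ.map WithLp.ofLp).map (fun v i => ((a - v i) / 2) ^ 2)).map (fun v => ∑ i, v i) := by
        rw [Measure.map_map (by fun_prop) (by fun_prop),
          Measure.map_map (by fun_prop) (by fun_prop)]
        congr 1
        funext x
        simp only [EuclideanSpace.real_norm_sq_eq, Finset.sum_div, Function.comp_apply,
          PiLp.sub_apply, corner_apply]
        congr 1; funext i; ring
    _ = ((μ.map WithLp.ofLp).map (fun v i => v i ^ 2)).map (fun v => ∑ i, v i) := by rw [hcoord]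
    _ = μ.map (fun x : E2 => ‖x‖ ^ 2) := by
        rw [Measure.map_map (by fun_prop) (by fun_prop),
          Measure.map_map (by fun_prop) (by fun_prop)]
        congr 1
        funext x
        simp only [EuclideanSpace.real_norm_sq_eq, Function.comp_apply]

def coverageSet {ι : Type*} [Fintype ι] (τ σ2 : ℝ) : Set (ι → ℝ) :=
  {s | ∃ i, s i > τ * ((∑ j, s j) - s i + σ2)}

section coverageSet

variable {ι : Type*} [Fintype ι] (τ σ2 : ℝ)

lemma measurableSet_coverageSet : MeasurableSet (coverageSet τ σ2 : Set (ι → ℝ)) := by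
  simp only [coverageSet, ofPred_exists]
  exact .iUnion fun i => measurableSet_lt (by fun_prop) (by fun_prop)

lemma smul_mem_coverageSet_iff {c : ℝ} (hc : 0 < c) {s : ι → ℝ} :
    c • s ∈ coverageSet τ (c * σ2) ↔ s ∈ coverageSet τ σ2 := by
  simp only [coverageSet, mem_ofPred_eq, Pi.smul_apply, smul_eq_mul, ← Finset.mul_sum]
  refine exists_congr fun i => ?_
  rw [show τ * (c * ∑ j, s j - c * s i + c * σ2) = c * (τ * (∑ j, s j - s i + σ2)) by ring,
    gt_iff_lt, gt_iff_lt, mul_lt_mul_iff_right₀ hc]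

end coverageSet

@[fun_prop]
lemma measurable_pl (h β : ℝ) (y : E2) : Measurable fun x => pl h β x y := by
  unfold pl; fun_prop

lemma pl_eq_four_rpow_neg_mul (h β : ℝ) (x y : E2) :
    pl h β x y = 4 ^ (-β) * (‖x - y‖ ^ 2 / 4 + (h / 2) ^ 2) ^ (-β) := by
  rw [pl, ← Real.mul_rpow (by norm_num) (by positivity)]
  ring_nf

lemma map_pl_corner_eq_map_smul_pl_zero {a : ℝ} (ha : 0 ≤ a) (h β : ℝ) :
    (volume.restrict (Sq 0 a)).map (fun x => pl h β x (corner a)) =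
      (volume.restrict (Sq 0 a)).map (fun x => 4 ^ (-β) * pl (h / 2) β x 0) := by
  set Q : ℝ → ℝ := fun t => 4 ^ (-β) * (t + (h / 2) ^ 2) ^ (-β)
  have hcorner : (fun x => pl h β x (corner a)) = Q ∘ fun x => ‖x - corner a‖ ^ 2 / 4 := by
    funext x; exact pl_eq_four_rpow_neg_mul h β x (corner a)
  have hcenter : (fun x => 4 ^ (-β) * pl (h / 2) β x 0) = Q ∘ fun x => ‖x‖ ^ 2 := by
    funext x; simp [pl, Q]
  rw [hcorner, hcenter, ← Measure.map_map (by fun_prop) (by fun_prop),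
    map_normSq_sub_corner_div_four ha, Measure.map_map (by fun_prop) (by fun_prop)]

theorem cov_corner_eq_cov_zero_half_height (β lam h σ2 τ : ℝ) {a : ℝ} (ha : 0 ≤ a) :
    cov β lam a h σ2 τ (corner a) = cov β lam a (h / 2) (4 ^ β * σ2) τ 0 := by
  refine tsum_congr fun n => ?_
  congr 2
  change (Measure.pi fun _ : Fin n => volume.restrict (Sq 0 a))
      ((fun x i => pl h β (x i) (corner a)) ⁻¹' coverageSet τ σ2) =
    (Measure.pi fun _ : Fin n => volume.restrict (Sq 0 a))
      ((fun x i => pl (h / 2) β (x i) 0) ⁻¹' coverageSet τ (4 ^ β * σ2))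
  have hσ : 4 ^ (-β) * (4 ^ β * σ2) = σ2 := by
    rw [Real.rpow_neg (by norm_num), inv_mul_cancel_left₀ (by positivity)]
  rw [← Measure.map_apply (by fun_prop) (measurableSet_coverageSet τ σ2),
    Measure.map_pi_comp_eq_of_map_eq (by fun_prop) (by fun_prop)
      (map_pl_corner_eq_map_smul_pl_zero ha h β),
    Measure.map_apply (by fun_prop) (measurableSet_coverageSet τ σ2)]
  congr 1
  ext x
  have hscale := smul_mem_coverageSet_iff τ (4 ^ β * σ2) (by positivity : (0 : ℝ) < 4 ^ (-β))
    (s := fun i => pl (h / 2) β (x i) 0)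
  rwa [hσ] at hscale

theorem corner_coverage_eq_center_coverage_half_height_general
    (a h β lam τ : ℝ) (ha : 0 < a) :
    cov β lam a h 0 τ (corner a) = cov β lam a (h / 2) 0 τ 0 := by
  simpa using cov_corner_eq_cov_zero_half_height β lam h 0 τ ha.le

/-- Corollary 2: in the absence of noise, the SINR coverage of a corner user in a room
of height `h` equals that of a center user in a room of height `h/2`. -/
theorem corner_coverage_eq_center_coverage_half_height
    (a h β lam τ : ℝ) (ha : 0 < a) (hh : 0 < h) (hβ : 0 < β) (hlam : 0 < lam)
    (hτ : 0 < τ) :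
    cov β lam a h 0 τ (corner a) = cov β lam a (h / 2) 0 τ 0 :=
  corner_coverage_eq_center_coverage_half_height_general a h β lam τ ha

end
end
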